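/- arXiv:2503.13357 — 5 statements merged into one kernel-verified Lean document; each statement's English description precedes it below -/
import Mathlib

section
/- Let f(α,β) = max{α(1+1/β), 1+1/α+1/β, 1+β, 2, 1+2/α} for α,β > 0. Then f(√2, √2) = 1+√2, and for all α,β > 0 we have f(α,β) ≥ 1+√2, i.e., the choice α=β=√2 minimizes f. -/
theorem stmt_0
    (f : ℝ → ℝ → ℝ)
    (hf : ∀ α β : ℝ, 0 < α → 0 < β →
      f α β = max (max (max (max (α * (1 + 1/β)) (1 + 1/α + 1/β)) (1 + β)) 2) (1 + 2/α)) :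
    f (Real.sqrt 2) (Real.sqrt 2) = 1 + Real.sqrt 2 ∧
    ∀ α β : ℝ, 0 < α → 0 < β → 1 + Real.sqrt 2 ≤ f α β := by
  set s := Real.sqrt 2 with hs
  have hspos : 0 < s := Real.sqrt_pos.mpr (by norm_num)
  have hs2 : s * s = 2 := Real.mul_self_sqrt (by norm_num)
  have hs1 : 1 ≤ s := by nlinarith
  constructor
  · rw [hf s s hspos hspos]
    have h1 : s * (1 + 1/s) = 1 + s := by field_simp; nlinarith
    have h2 : 1 + 1/s + 1/s = 1 + s := by field_simp; nlinarith
    have h3 : (1:ℝ) + 2/s = 1 + s := by field_simp; nlinarith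
    rw [h1, h2, h3]
    simp only [max_self]
    rw [max_eq_left (by linarith : (2:ℝ) ≤ 1 + s), max_self]
  · intro α β hα hβ
    rw [hf α β hα hβ]
    rcases le_or_gt s β with hb | hb
    · calc 1 + s ≤ 1 + β := by linarith
        _ ≤ _ := le_max_of_le_left (le_max_of_le_left (le_max_right _ _))
    · rcases le_or_gt s α with ha | ha
      · have h1b : 1/s ≤ 1/β := one_div_le_one_div_of_le hβ hb.le
        have : 1 + s ≤ α * (1 + 1/β) := by
          have hss : s * (1 + 1/s) = 1 + s := by field_simp; nlinarith
          calc 1 + s = s * (1 + 1/s) := hss.symm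
            _ ≤ α * (1 + 1/β) := by
                apply mul_le_mul ha (by linarith) (by positivity) hα.le
        exact this.trans (le_max_of_le_left (le_max_of_le_left
          (le_max_of_le_left (le_max_left _ _))))
      · have h2a : 2/s ≤ 2/α := by
          apply div_le_div_of_nonneg_left (by norm_num) hα ha.le
        have hss : (2:ℝ)/s = s := by field_simp; nlinarith
        have : 1 + s ≤ 1 + 2/α := by rw [← hss]; linarith
        exact this.trans (le_max_right _ _)
end

section
/- Let g(α,β) = max{α(1+1/β), 1+1/α+1/β+1/(αβ), β, 2, 1+2/α} for α,β > 0. With α* = (1+√5)/2 and β* = (1+√5+√(2(7+5√5)))/4, we have g(α*,β*) = β* < 2.316513, and g(α,β) ≥ β* for all α,β > 0. -/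
set_option maxHeartbeats 2000000 in
theorem stmt_4
    (g : ℝ → ℝ → ℝ)
    (hg : ∀ α β : ℝ, 0 < α → 0 < β →
      g α β = max (max (max (max (α * (1 + 1/β)) (1 + 1/α + 1/β + 1/(α*β))) β) 2) (1 + 2/α))
    (αs βs : ℝ)
    (hαs : αs = (1 + Real.sqrt 5) / 2)
    (hβs : βs = (1 + Real.sqrt 5 + Real.sqrt (2 * (7 + 5 * Real.sqrt 5))) / 4) :
    g αs βs = βs ∧ βs < 2.316513 ∧
    ∀ α β : ℝ, 0 < α → 0 < β → βs ≤ g α β := by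
  set s5 := Real.sqrt 5 with hs5def
  set s := Real.sqrt (2 * (7 + 5 * Real.sqrt 5)) with hsdef
  have hs5nn : 0 ≤ s5 := Real.sqrt_nonneg _
  have hs5sq : s5 ^ 2 = 5 := Real.sq_sqrt (by norm_num)
  have hs5lb : 2 < s5 := by nlinarith
  have hs5ub : s5 < 2.2360680 := by nlinarith
  have hsnn : 0 ≤ s := Real.sqrt_nonneg _
  have hssq : s ^ 2 = 14 + 10 * s5 := by
    rw [hsdef, Real.sq_sqrt (by nlinarith)]; ring
  have hslb : 6 < s := by nlinarith
  have hsub : s < 6.029983 := by nlinarith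
  have hαpos : 0 < αs := by rw [hαs]; nlinarith
  have hβpos : 0 < βs := by rw [hβs]; nlinarith
  have hα2 : αs ^ 2 = αs + 1 := by rw [hαs]; nlinarith
  have hβ2 : βs ^ 2 = αs * βs + αs := by rw [hαs, hβs]; nlinarith
  have hβgt2 : 2 < βs := by rw [hβs]; nlinarith
  have hαβ : αs < βs := by rw [hαs, hβs]; nlinarith
  have hβnum : βs < 2.316513 := by rw [hβs]; nlinarith
  have e3 : 1 + 2 / αs ≤ βs := by
    have h : 2 / αs = s5 - 1 := by
      rw [hαs, div_eq_iff (by nlinarith)]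
      nlinarith
    rw [h, hβs]
    nlinarith
  clear hs5def hsdef hs5sq hs5lb hs5ub hssq hslb hsub hs5nn hsnn hαs hβs
  clear_value s5 s
  clear s5 s
  -- key algebra
  have key : ∀ β : ℝ, 0 < β → β ≤ βs → βs * β ≤ αs * (β + 1) := by
    intro β hβ hβle
    nlinarith [mul_nonneg (sub_nonneg.2 hβle) (le_of_lt (sub_pos.2 hαβ))]
  have e1 : αs * (1 + 1 / βs) = βs := by
    field_simp
    linear_combination -hβ2
  have hinv : 1 + 1 / αs = αs := by
    field_simp
    linear_combination -hα2
  have e2 : 1 + 1 / αs + 1 / βs + 1 / (αs * βs) = βs := by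
    have h : 1 + 1 / αs + 1 / βs + 1 / (αs * βs) = (1 + 1 / αs) * (1 + 1 / βs) := by
      field_simp; ring
    rw [h, hinv, e1]
  refine ⟨?_, hβnum, ?_⟩
  · rw [hg _ _ hαpos hβpos, e1, e2]
    simp only [max_self]
    rw [max_eq_left (le_of_lt hβgt2), max_eq_left e3]
  · intro α β hα hβ
    rw [hg _ _ hα hβ]
    rcases le_total βs β with h | h
    · exact h.trans (le_max_of_le_left (le_max_of_le_left (le_max_right _ _)))
    · have hk := key β hβ h
      rcases le_total αs α with hc | hc
      · have hx : βs ≤ α * (1 + 1 / β) := by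
          rw [show α * (1 + 1 / β) = α * (β + 1) / β by field_simp,
            le_div_iff₀ hβ]
          have h2 : αs * (β + 1) ≤ α * (β + 1) :=
            mul_le_mul_of_nonneg_right hc (by positivity)
          linarith
        exact hx.trans (le_max_of_le_left (le_max_of_le_left
          (le_max_of_le_left (le_max_left _ _))))
      · have hstep : αs * α ≤ α + 1 := by
          nlinarith [mul_nonneg (sub_nonneg.2 hc) hαpos.le]
        have hx : βs ≤ 1 + 1 / α + 1 / β + 1 / (α * β) := by
          rw [show 1 + 1 / α + 1 / β + 1 / (α * β) = (α + 1) * (β + 1) / (α * β) by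
            field_simp; ring, le_div_iff₀ (mul_pos hα hβ)]
          have h1 : α * (βs * β) ≤ α * (αs * (β + 1)) :=
            mul_le_mul_of_nonneg_left hk hα.le
          have h2 : (αs * α) * (β + 1) ≤ (α + 1) * (β + 1) :=
            mul_le_mul_of_nonneg_right hstep (by positivity)
          nlinarith
        exact hx.trans (le_max_of_le_left (le_max_of_le_left
          (le_max_of_le_left (le_max_right _ _))))
end

section
/- Suppose u ≥ α·t with α ≥ 1, t > 0, and 0 ≤ p ≤ u. Then t + p ≤ (1 + 1/α)·min(u, t+p). -/
theorem stmt_5 (α t u p : ℝ) (hα : 1 ≤ α) (ht : 0 < t) (hu : α * t ≤ u)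
    (hp0 : 0 ≤ p) (hpu : p ≤ u) :
    t + p ≤ (1 + 1/α) * min u (t + p) := by
  have hα0 : 0 < α := lt_of_lt_of_le one_pos hα
  rcases le_total u (t + p) with h | h
  · rw [min_eq_left h]
    have ht' : t ≤ u / α := by
      rw [le_div_iff₀ hα0]; linarith [hu]
    have : (1 + 1/α) * u = u + u / α := by field_simp
    rw [this]; linarith
  · rw [min_eq_right h]
    have : 0 ≤ 1/α := by positivity
    nlinarith
end

section
/- Define h(r) = (9r² − 3r)/(6r² − 8r + 6) for 1 ≤ r ≤ 3. Then h attains its maximum on [1,3] at r = 1 + √(2/3), and this maximum value equals 3(7+3√6)/20. -/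
theorem stmt_8
    (h : ℝ → ℝ)
    (hh : ∀ r : ℝ, h r = (9*r^2 - 3*r) / (6*r^2 - 8*r + 6)) :
    h (1 + Real.sqrt (2/3)) = 3 * (7 + 3 * Real.sqrt 6) / 20 ∧
    (1 : ℝ) ≤ 1 + Real.sqrt (2/3) ∧ 1 + Real.sqrt (2/3) ≤ 3 ∧
    ∀ r : ℝ, 1 ≤ r → r ≤ 3 → h r ≤ 3 * (7 + 3 * Real.sqrt 6) / 20 := by
  set t := Real.sqrt 6 with ht
  have ht2 : t ^ 2 = 6 := Real.sq_sqrt (by norm_num)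
  have ht0 : (2 : ℝ) ≤ t := by nlinarith [Real.sqrt_nonneg 6]
  have ht3 : t ≤ 3 := by nlinarith [Real.sqrt_nonneg 6]
  have hs : Real.sqrt (2/3) = t / 3 := by
    rw [show (2/3 : ℝ) = (t/3)^2 by nlinarith, Real.sqrt_sq (by nlinarith)]
  refine ⟨?_, ?_, ?_, ?_⟩
  · rw [hh, hs]
    have hden : 6*(1 + t/3)^2 - 8*(1 + t/3) + 6 = 8 + 4*t/3 := by ring_nf; nlinarith
    rw [hden]
    rw [div_eq_iff (by nlinarith)]
    nlinarith
  · rw [hs]; nlinarith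
  · rw [hs]; nlinarith
  · intro r h1 h3
    rw [hh]
    have hden : 0 < 6*r^2 - 8*r + 6 := by nlinarith [sq_nonneg (r - 1)]
    rw [div_le_iff₀ hden]
    nlinarith [mul_nonneg (by nlinarith : (0:ℝ) ≤ t - 1) (sq_nonneg (r - 1 - t/3))]
end

section
/- The function F(β) = (1+β)(√6·β + √6 + 6)/(2β((3−√6)β − √6 + 6)) is strictly decreasing for β ∈ (1,2], and F(2) = 3(7+3√6)/20. -/
/-! Cross-multiplying, `F a - F b` has the sign of
`N(a) D(b) - N(b) D(a) = 2 (b - a) ((12 - 6√6) a b + (12 - 3√6) (a + b) + 30)`,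
where `N` and `D` are the numerator and denominator of `F` and `√6 ^ 2 = 6` has been used.
For `0 ≤ a, b` with `a b ≤ 4` the second factor is at least `78 - 24√6 > 0`, so `F` is strictly
decreasing on all of `(0, 2]`. -/

open Real Set

noncomputable def randPcpBound (β : ℝ) : ℝ :=
  (1 + β) * (√6 * β + √6 + 6) / (2 * β * ((3 - √6) * β - √6 + 6))

lemma two_lt_sqrt_six : 2 < √6 := by
  rw [lt_sqrt (by norm_num)]; norm_num

lemma sqrt_six_lt_five_halves : √6 < 5 / 2 := by
  rw [sqrt_lt' (by norm_num)]; norm_num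

lemma randPcpBound_denominator_pos {β : ℝ} (hβ : 0 < β) :
    0 < 2 * β * ((3 - √6) * β - √6 + 6) := by
  have hs := sqrt_six_lt_five_halves
  have : 0 < (3 - √6) * β := mul_pos (by linarith) hβ
  exact mul_pos (by positivity) (by linarith)

lemma randPcpBound_cross_sub (a b : ℝ) :
    (1 + a) * (√6 * a + √6 + 6) * (2 * b * ((3 - √6) * b - √6 + 6))
      - (1 + b) * (√6 * b + √6 + 6) * (2 * a * ((3 - √6) * a - √6 + 6))
      = 2 * (b - a) * ((12 - 6 * √6) * (a * b) + (12 - 3 * √6) * (a + b) + 30) := by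
  linear_combination (-2 * (b - a) * (1 + a) * (1 + b)) * sq_sqrt (show (0 : ℝ) ≤ 6 by norm_num)

lemma randPcpBound_cross_factor_pos {a b : ℝ} (ha : 0 ≤ a) (hb : 0 ≤ b) (hab : a * b ≤ 4) :
    0 < (12 - 6 * √6) * (a * b) + (12 - 3 * √6) * (a + b) + 30 := by
  have hs₁ := two_lt_sqrt_six
  have hs₂ := sqrt_six_lt_five_halves
  nlinarith [mul_le_mul_of_nonneg_left hab (by linarith : (0 : ℝ) ≤ 6 * √6 - 12)]

theorem randPcpBound_strictAntiOn : StrictAntiOn randPcpBound (Ioc 0 2) := by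
  rintro a ⟨ha₀, ha₂⟩ b ⟨hb₀, hb₂⟩ hab
  rw [randPcpBound, randPcpBound,
    div_lt_div_iff₀ (randPcpBound_denominator_pos hb₀) (randPcpBound_denominator_pos ha₀),
    ← sub_pos, randPcpBound_cross_sub]
  have hab₄ : a * b ≤ 4 := by nlinarith
  exact mul_pos (by linarith) (randPcpBound_cross_factor_pos ha₀.le hb₀.le hab₄)

theorem randPcpBound_two : randPcpBound 2 = 3 * (7 + 3 * √6) / 20 := by
  rw [randPcpBound, div_eq_div_iff (randPcpBound_denominator_pos two_pos).ne' (by norm_num)]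
  linear_combination 108 * sq_sqrt (show (0 : ℝ) ≤ 6 by norm_num)

theorem stmt_13
    (F : ℝ → ℝ)
    (hF : ∀ β : ℝ, F β = (1 + β) * (Real.sqrt 6 * β + Real.sqrt 6 + 6)
      / (2 * β * ((3 - Real.sqrt 6) * β - Real.sqrt 6 + 6))) :
    StrictAntiOn F (Set.Ioc 1 2) ∧ F 2 = 3 * (7 + 3 * Real.sqrt 6) / 20 := by
  obtain rfl : F = randPcpBound := funext hF
  exact ⟨randPcpBound_strictAntiOn.mono (Ioc_subset_Ioc_left zero_le_one), randPcpBound_two⟩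
end
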